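/- Let β₁, β₂, δ ∈ ℝ and let A' = [[1 + β₁ + δ(1 + β₂), −(β₁ + δβ₂)],[1, 0]] ∈ ℝ^{2×2}. If 1 + β₁ + δ(1 + β₂) ≠ 1 + β₁ + δβ₂, 1 + β₁ + δ(1 + β₂) ≠ −(1 + β₁ + δβ₂), and β₁ + δβ₂ ≠ 1, then det(e^{iω}I − A') ≠ 0 for every ω ∈ ℝ; i.e., A' has no eigenvalue on the unit circle of ℂ. -/
import Mathlib


open Matrix

/-- Under the stated inequalities on the parameters, the shifted system matrix
`A'` has no eigenvalue on the unit circle: `det(e^{iω}I − A') ≠ 0` for every `ω ∈ ℝ`. -/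
theorem no_eigenvalue_on_unit_circle
    (β₁ β₂ δ : ℝ)
    (h1 : 1 + β₁ + δ * (1 + β₂) ≠ 1 + β₁ + δ * β₂)
    (h2 : 1 + β₁ + δ * (1 + β₂) ≠ -(1 + β₁ + δ * β₂))
    (h3 : β₁ + δ * β₂ ≠ 1) :
    ∀ ω : ℝ, det (Complex.exp (ω * Complex.I) • (1 : Matrix (Fin 2) (Fin 2) ℂ) -
      (!![1 + β₁ + δ * (1 + β₂), -(β₁ + δ * β₂); 1, 0] : Matrix (Fin 2) (Fin 2) ℝ).map
        (algebraMap ℝ ℂ)) ≠ 0 := by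
  intro ω h
  set a : ℝ := 1 + β₁ + δ * (1 + β₂) with ha
  set b : ℝ := β₁ + δ * β₂ with hb
  set z := Complex.exp (ω * Complex.I) with hzdef
  simp [Matrix.det_fin_two, Matrix.map_apply, Matrix.smul_apply, Matrix.one_apply] at h
  have heq : z ^ 2 - (a : ℂ) * z + (b : ℂ) = 0 := by
    rw [ha, hb] at h ⊢; push_cast at h ⊢; linear_combination h
  have hz : z * (starRingEnd ℂ) z = 1 := by
    rw [Complex.mul_conj, Complex.normSq_eq_norm_sq, hzdef, Complex.norm_exp_ofReal_mul_I]
    norm_num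
  have heqc : ((starRingEnd ℂ) z) ^ 2 - (a : ℂ) * (starRingEnd ℂ) z + (b : ℂ) = 0 := by
    have := congrArg (starRingEnd ℂ) heq
    simpa [Complex.conj_ofReal] using this
  by_cases hzz : z = (starRingEnd ℂ) z
  · have hz2 : (z - 1) * (z + 1) = 0 := by
      rw [← hzz] at hz; linear_combination hz
    rcases mul_eq_zero.mp hz2 with h0 | h0
    · have hz1 : z = 1 := sub_eq_zero.mp h0
      rw [hz1] at heq
      have hc : ((1 - a + b : ℝ) : ℂ) = 0 := by push_cast; linear_combination heq
      have hr : 1 - a + b = 0 := by exact_mod_cast hc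
      exact h1 (by linear_combination -hr + hb - ha)
    · have hz1 : z = -1 := eq_neg_of_add_eq_zero_left h0
      rw [hz1] at heq
      have hc : ((1 + a + b : ℝ) : ℂ) = 0 := by push_cast; linear_combination heq
      have hr : 1 + a + b = 0 := by exact_mod_cast hc
      exact h2 (by linear_combination hr - hb - ha)
  · have hfac : (z - (starRingEnd ℂ) z) * (z + (starRingEnd ℂ) z - (a : ℂ)) = 0 := by
      linear_combination heq - heqc
    have hsum : z + (starRingEnd ℂ) z = (a : ℂ) := by
      rcases mul_eq_zero.mp hfac with h0 | h0
      · exact absurd (sub_eq_zero.mp h0) hzz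
      · exact sub_eq_zero.mp h0
    have hbc : (b : ℂ) = 1 := by linear_combination heq - z * hsum + hz
    exact h3 (by exact_mod_cast hbc)
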